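/- Three congruent disks of radius (√3/2)R centered at (−(√3/4)R, R/4), (0, −R/2), and ((√3/4)R, R/4) cover the closed disk of radius R centered at the origin. -/
import Mathlib

private lemma disk_aux (R t A : ℝ) (hR : 0 < R) (hA : 0 ≤ A) (h1 : A ≤ R ^ 2)
    (h2 : A ≤ t ^ 2) (ht : 0 ≤ t) : A ≤ R * t := by
  nlinarith [mul_nonneg (sub_nonneg.mpr h1) (sub_nonneg.mpr h2),
    mul_nonneg (mul_nonneg hR.le ht) hA, mul_nonneg hR.le ht]

/-- Three disks of radius (√3/2)R centered as stated cover the closed disk of radius R. -/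
theorem three_disk_cover (R x y : ℝ) (hR : 0 < R) (h : x ^ 2 + y ^ 2 ≤ R ^ 2) :
    (x + Real.sqrt 3 / 4 * R) ^ 2 + (y - R / 4) ^ 2 ≤ (Real.sqrt 3 / 2 * R) ^ 2 ∨
    x ^ 2 + (y + R / 2) ^ 2 ≤ (Real.sqrt 3 / 2 * R) ^ 2 ∨
    (x - Real.sqrt 3 / 4 * R) ^ 2 + (y - R / 4) ^ 2 ≤ (Real.sqrt 3 / 2 * R) ^ 2 := by
  set s := Real.sqrt 3 with hsdef
  have hs : s ^ 2 = 3 := Real.sq_sqrt (by norm_num)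
  have hs0 : 0 < s := Real.sqrt_pos.mpr (by norm_num)
  have hA : 0 ≤ x ^ 2 + y ^ 2 := by positivity
  rcases le_or_gt 0 x with hx | hx
  · rcases le_or_gt 0 (s * x + 3 * y) with h1 | h1
    · right; right
      have ht : 0 ≤ s * x + y := by nlinarith [mul_nonneg hs0.le hx]
      have ht2 : x ^ 2 + y ^ 2 ≤ (s * x + y) ^ 2 := by
        nlinarith [mul_nonneg hx h1]
      have key := disk_aux R (s * x + y) (x ^ 2 + y ^ 2) hR hA h ht2 ht
      nlinarith [key]
    · right; left
      have ht : 0 ≤ -2 * y := by nlinarith [mul_nonneg hs0.le hx]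
      have ht2 : x ^ 2 + y ^ 2 ≤ (-2 * y) ^ 2 := by
        nlinarith [mul_nonneg hx (neg_nonneg.mpr h1.le), sq_nonneg (s * x + 3 * y)]
      have key := disk_aux R (-2 * y) (x ^ 2 + y ^ 2) hR hA h ht2 ht
      nlinarith [key]
  · rcases le_or_gt 0 (-(s * x) + 3 * y) with h1 | h1
    · left
      have ht : 0 ≤ -(s * x) + y := by nlinarith [mul_nonneg hs0.le (neg_nonneg.mpr hx.le)]
      have ht2 : x ^ 2 + y ^ 2 ≤ (-(s * x) + y) ^ 2 := by
        nlinarith [mul_nonneg (neg_nonneg.mpr hx.le) h1]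
      have key := disk_aux R (-(s * x) + y) (x ^ 2 + y ^ 2) hR hA h ht2 ht
      nlinarith [key]
    · right; left
      have ht : 0 ≤ -2 * y := by nlinarith [mul_nonneg hs0.le (neg_nonneg.mpr hx.le)]
      have ht2 : x ^ 2 + y ^ 2 ≤ (-2 * y) ^ 2 := by
        nlinarith [mul_nonneg (neg_nonneg.mpr hx.le) (neg_nonneg.mpr h1.le),
          sq_nonneg (-(s * x) + 3 * y)]
      have key := disk_aux R (-2 * y) (x ^ 2 + y ^ 2) hR hA h ht2 ht
      nlinarith [key]
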